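/- Let y_1, …, y_m be distinct real support nodes and x_1, …, x_n distinct real test nodes disjoint from the support nodes, with n ≥ m−1, and let L ∈ ℂ^{n×m} be the Loewner matrix with entries L_{kj} = (e^{i x_k} − e^{i y_j})/(x_k − y_j). Assume the smallest singular value of L is non-degenerate, i.e., the eigenspace of the Hermitian matrix LᴴL corresponding to its smallest eigenvalue is one-dimensional. Let w ∈ ℂ^m be a unit vector minimizing ‖Lu‖_2 over all unit vectors u ∈ ℂ^m. Define p(x) = Σ_{j=1}^m e^{i y_j} w_j ∏_{k≠j}(x − y_k) and q(x) = Σ_{j=1}^m w_j ∏_{k≠j}(x − y_k), and assume p and q have no common complex root. Then q(x) ≠ 0 for every real x and |p(x)/q(x)| = 1 for every real x. -/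

import Mathlib

/-!
A unit minimizer `w` of `‖L u‖` is an eigenvector of `Lᴴ L` for its smallest eigenvalue. Since
`conj (L k j) = -exp (-I x k) * L k j * exp (-I y j)`, the vector `w'_j = exp (-I y j) * conj (w j)`
is again a unit minimizer (on the real line it is the coefficient vector of `1 / conj r`), so by
non-degeneracy `w' = c • w` with `‖c‖ = 1`. On the real line this reads `conj (q t) = c * p t`;
hence `‖p t‖ = ‖q t‖`, and a real zero of `q` would be a common zero of `p` and `q`.
-/

open Matrix Complex ComplexConjugate
open scoped ComplexOrder

section SumNormSq

variable {ι : Type*} [Fintype ι]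

lemma star_dotProduct_self_eq_sum_norm_sq (v : ι → ℂ) :
    star v ⬝ᵥ v = ((∑ i, ‖v i‖ ^ 2 : ℝ) : ℂ) := by
  push_cast
  refine Finset.sum_congr rfl fun i _ => ?_
  rw [Pi.star_apply, RCLike.star_def, mul_comm, mul_conj, normSq_eq_norm_sq]
  norm_cast

lemma sum_norm_sq_smul (c : ℂ) (v : ι → ℂ) :
    ∑ i, ‖(c • v) i‖ ^ 2 = ‖c‖ ^ 2 * ∑ i, ‖v i‖ ^ 2 := by
  simp only [Pi.smul_apply, smul_eq_mul, norm_mul, mul_pow, Finset.mul_sum]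

lemma sum_norm_sq_pos {v : ι → ℂ} (hv : v ≠ 0) : 0 < ∑ i, ‖v i‖ ^ 2 := by
  obtain ⟨i, hi⟩ := Function.ne_iff.mp hv
  exact Finset.sum_pos' (fun _ _ => by positivity)
    ⟨i, Finset.mem_univ i, pow_pos (norm_pos_iff.mpr hi) 2⟩

end SumNormSq

section ConjTransposeMulSelf

variable {ι κ : Type*} [Fintype ι] [Fintype κ] (L : Matrix κ ι ℂ)

lemma star_dotProduct_conjTranspose_mul_mulVec (u v : ι → ℂ) :
    star u ⬝ᵥ ((Lᴴ * L) *ᵥ v) = star (L *ᵥ u) ⬝ᵥ (L *ᵥ v) := by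
  rw [star_mulVec, dotProduct_mulVec, dotProduct_mulVec, vecMul_vecMul]

lemma mul_sum_norm_sq_le_of_isMin_unit {w : ι → ℂ}
    (hmin : ∀ u : ι → ℂ, ∑ j, ‖u j‖ ^ 2 = 1 →
      ∑ k, ‖(L *ᵥ w) k‖ ^ 2 ≤ ∑ k, ‖(L *ᵥ u) k‖ ^ 2) (u : ι → ℂ) :
    (∑ k, ‖(L *ᵥ w) k‖ ^ 2) * ∑ j, ‖u j‖ ^ 2 ≤ ∑ k, ‖(L *ᵥ u) k‖ ^ 2 := by
  rcases eq_or_ne u 0 with rfl | hu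
  · simp
  set s := √(∑ j, ‖u j‖ ^ 2)
  have hs : s ^ 2 = ∑ j, ‖u j‖ ^ 2 := Real.sq_sqrt (sum_norm_sq_pos hu).le
  have hs0 : s ≠ 0 := (Real.sqrt_pos.mpr (sum_norm_sq_pos hu)).ne'
  have hscale : ‖((s⁻¹ : ℝ) : ℂ)‖ ^ 2 * s ^ 2 = 1 := by
    rw [norm_real, Real.norm_eq_abs, sq_abs, ← mul_pow, inv_mul_cancel₀ hs0, one_pow]
  have h := hmin (((s⁻¹ : ℝ) : ℂ) • u) (by rw [sum_norm_sq_smul, ← hs, hscale])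
  rw [mulVec_smul, sum_norm_sq_smul] at h
  calc (∑ k, ‖(L *ᵥ w) k‖ ^ 2) * ∑ j, ‖u j‖ ^ 2
      ≤ (‖((s⁻¹ : ℝ) : ℂ)‖ ^ 2 * ∑ k, ‖(L *ᵥ u) k‖ ^ 2) * s ^ 2 := by
        rw [hs]; gcongr
    _ = ∑ k, ‖(L *ᵥ u) k‖ ^ 2 := by rw [mul_right_comm, hscale, one_mul]

lemma star_dotProduct_conjTranspose_mul_self_sub_smul_one_mulVec [DecidableEq ι] (μ : ℝ)
    (u : ι → ℂ) :
    star u ⬝ᵥ ((Lᴴ * L - (μ : ℂ) • 1) *ᵥ u) =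
      ((∑ k, ‖(L *ᵥ u) k‖ ^ 2 - μ * ∑ j, ‖u j‖ ^ 2 : ℝ) : ℂ) := by
  rw [sub_mulVec, smul_mulVec, one_mulVec, dotProduct_sub, dotProduct_smul,
    star_dotProduct_conjTranspose_mul_mulVec, star_dotProduct_self_eq_sum_norm_sq,
    star_dotProduct_self_eq_sum_norm_sq, smul_eq_mul, ofReal_sub, ofReal_mul]

variable {L} {μ : ℝ} (hμ : ∀ u : ι → ℂ, μ * ∑ j, ‖u j‖ ^ 2 ≤ ∑ k, ‖(L *ᵥ u) k‖ ^ 2)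
include hμ

lemma posSemidef_conjTranspose_mul_self_sub_smul_one [DecidableEq ι] :
    (Lᴴ * L - (μ : ℂ) • 1).PosSemidef := by
  refine .of_dotProduct_mulVec_nonneg ?_ fun u => ?_
  · simp [IsHermitian, conjTranspose_sub, conjTranspose_smul, conjTranspose_mul]
  · rw [star_dotProduct_conjTranspose_mul_self_sub_smul_one_mulVec, zero_le_real, sub_nonneg]
    exact hμ u

lemma conjTranspose_mul_self_mulVec_eq_smul_of_sum_norm_sq_eq [DecidableEq ι] {u : ι → ℂ}
    (hu : ∑ k, ‖(L *ᵥ u) k‖ ^ 2 = μ * ∑ j, ‖u j‖ ^ 2) :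
    (Lᴴ * L) *ᵥ u = (μ : ℂ) • u := by
  have h := ((posSemidef_conjTranspose_mul_self_sub_smul_one hμ).dotProduct_mulVec_zero_iff u).mp
    (by rw [star_dotProduct_conjTranspose_mul_self_sub_smul_one_mulVec, hu, sub_self, ofReal_zero])
  rwa [sub_mulVec, smul_mulVec, one_mulVec, sub_eq_zero] at h

lemma le_of_hasEigenvalue_conjTranspose_mul_self [DecidableEq ι] {ν : ℝ}
    (hν : Module.End.HasEigenvalue (toLin' (Lᴴ * L)) (ν : ℂ)) : μ ≤ ν := by
  obtain ⟨v, hv, hv0⟩ := hν.exists_hasEigenvector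
  rw [Module.End.mem_eigenspace_iff, toLin'_apply] at hv
  have hLv : ∑ k, ‖(L *ᵥ v) k‖ ^ 2 = ν * ∑ j, ‖v j‖ ^ 2 := by
    apply ofReal_injective
    rw [← star_dotProduct_self_eq_sum_norm_sq, ← star_dotProduct_conjTranspose_mul_mulVec, hv,
      dotProduct_smul, star_dotProduct_self_eq_sum_norm_sq, smul_eq_mul, ofReal_mul]
  exact le_of_mul_le_mul_right (hLv ▸ hμ v) (sum_norm_sq_pos hv0)

end ConjTransposeMulSelf

lemma exists_smul_eq_of_isMin_unit {ι κ : Type*} [Fintype ι] [Fintype κ] [DecidableEq ι]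
    {L : Matrix κ ι ℂ}
    (hnd : ∃ μ : ℝ,
      Module.End.HasEigenvalue (toLin' (Lᴴ * L)) (μ : ℂ) ∧
      (∀ ν : ℝ, Module.End.HasEigenvalue (toLin' (Lᴴ * L)) (ν : ℂ) → μ ≤ ν) ∧
      Module.finrank ℂ (Module.End.eigenspace (toLin' (Lᴴ * L)) (μ : ℂ)) = 1)
    {w : ι → ℂ} (hw : ∑ j, ‖w j‖ ^ 2 = 1)
    (hmin : ∀ u : ι → ℂ, ∑ j, ‖u j‖ ^ 2 = 1 →
      ∑ k, ‖(L *ᵥ w) k‖ ^ 2 ≤ ∑ k, ‖(L *ᵥ u) k‖ ^ 2)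
    {v : ι → ℂ} (hv : ∑ j, ‖v j‖ ^ 2 = 1)
    (hLv : ∑ k, ‖(L *ᵥ v) k‖ ^ 2 = ∑ k, ‖(L *ᵥ w) k‖ ^ 2) :
    ∃ c : ℂ, c • w = v := by
  have hlb := mul_sum_norm_sq_le_of_isMin_unit L hmin
  have hw0 : w ≠ 0 := fun h => by simp [h] at hw
  have hLw_eig :=
    conjTranspose_mul_self_mulVec_eq_smul_of_sum_norm_sq_eq hlb (by rw [hw, mul_one])
  have hLv_eig :=
    conjTranspose_mul_self_mulVec_eq_smul_of_sum_norm_sq_eq hlb (by rw [hv, mul_one, hLv])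
  obtain ⟨μ, hμ, hμ_min, hμ_rank⟩ := hnd
  obtain rfl : μ = ∑ k, ‖(L *ᵥ w) k‖ ^ 2 :=
    le_antisymm (hμ_min _ (Module.End.hasEigenvalue_of_hasEigenvector
        ⟨Module.End.mem_eigenspace_iff.mpr (by rwa [toLin'_apply]), hw0⟩))
      (le_of_hasEigenvalue_conjTranspose_mul_self hlb hμ)
  obtain ⟨c, hc⟩ := (finrank_eq_one_iff_of_nonzero' ⟨w, by
      rwa [Module.End.mem_eigenspace_iff, toLin'_apply]⟩ (Subtype.coe_ne_coe.mp hw0)).mp hμ_rank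
    ⟨v, by rwa [Module.End.mem_eigenspace_iff, toLin'_apply]⟩
  exact ⟨c, congrArg Subtype.val hc⟩

lemma loewner_mul_exp_neg (a b : ℝ) :
    (exp (I * a) - exp (I * b)) / (a - b) * exp (-(I * b)) =
      -exp (I * a) * conj ((exp (I * a) - exp (I * b)) / (a - b)) := by
  have hconj (t : ℝ) : conj (exp (I * t)) = (exp (I * t))⁻¹ := by
    rw [← exp_conj, ← exp_neg]; simp
  rw [map_div₀, map_sub, hconj, hconj, ← ofReal_sub, conj_ofReal, ofReal_sub, exp_neg]
  have hinv (t : ℝ) : exp (I * t) * (exp (I * t))⁻¹ = 1 := mul_inv_cancel₀ (exp_ne_zero _)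
  linear_combination ((a : ℂ) - b)⁻¹ * (hinv a - hinv b)

section Mirror

variable {ι κ : Type*} [Fintype ι]

noncomputable def mirror (y : ι → ℝ) (w : ι → ℂ) : ι → ℂ :=
  fun j => exp (-(I * y j)) * conj (w j)

lemma sum_norm_sq_mirror (y : ι → ℝ) (w : ι → ℂ) :
    ∑ j, ‖mirror y w j‖ ^ 2 = ∑ j, ‖w j‖ ^ 2 := by
  simp [mirror, norm_exp]

lemma mulVec_mirror {x : κ → ℝ} {y : ι → ℝ} {L : Matrix κ ι ℂ}
    (hL : ∀ k j, L k j = (exp (I * x k) - exp (I * y j)) / (x k - y j)) (w : ι → ℂ) :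
    L *ᵥ mirror y w = fun k => -exp (I * x k) * conj ((L *ᵥ w) k) := by
  ext k
  simp only [mulVec, dotProduct, mirror, map_sum, map_mul, Finset.mul_sum]
  refine Finset.sum_congr rfl fun j _ => ?_
  rw [← mul_assoc, hL, loewner_mul_exp_neg]
  ring

lemma sum_norm_sq_mulVec_mirror [Fintype κ] {x : κ → ℝ} {y : ι → ℝ} {L : Matrix κ ι ℂ}
    (hL : ∀ k j, L k j = (exp (I * x k) - exp (I * y j)) / (x k - y j)) (w : ι → ℂ) :
    ∑ k, ‖(L *ᵥ mirror y w) k‖ ^ 2 = ∑ k, ‖(L *ᵥ w) k‖ ^ 2 := by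
  simp [mulVec_mirror hL, norm_exp]

lemma conj_barycentric_eq_of_mirror_eq_smul [DecidableEq ι] {y : ι → ℝ} {w : ι → ℂ} {c : ℂ}
    (hc : c • w = mirror y w) (t : ℝ) :
    conj (∑ j, w j * ∏ k ∈ Finset.univ.erase j, ((t : ℂ) - y k)) =
      c * ∑ j, exp (I * y j) * w j * ∏ k ∈ Finset.univ.erase j, ((t : ℂ) - y k) := by
  simp only [map_sum, map_mul, map_prod, map_sub, conj_ofReal, Finset.mul_sum]
  refine Finset.sum_congr rfl fun j _ => ?_
  have hj : c * w j = exp (-(I * y j)) * conj (w j) := congrFun hc j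
  have hinv : exp (I * y j) * exp (-(I * y j)) = 1 := by rw [← exp_add, add_neg_cancel, exp_zero]
  linear_combination (-(exp (I * y j)) * ∏ k ∈ Finset.univ.erase j, ((t : ℂ) - y k)) * hj
    - conj (w j) * (∏ k ∈ Finset.univ.erase j, ((t : ℂ) - y k)) * hinv

end Mirror

theorem stmt_3 (m n : ℕ)
    (y : Fin m → ℝ)
    (x : Fin n → ℝ)
    (L : Matrix (Fin n) (Fin m) ℂ)
    (hL : ∀ k j, L k j = (Complex.exp (Complex.I * (x k : ℝ)) - Complex.exp (Complex.I * (y j : ℝ)))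
        / (((x k : ℝ) : ℂ) - ((y j : ℝ) : ℂ)))
    -- non-degeneracy: the eigenspace of LᴴL for its smallest eigenvalue is one-dimensional
    (hnd : ∃ μ : ℝ,
      Module.End.HasEigenvalue (Matrix.toLin' (Lᴴ * L)) (μ : ℂ) ∧
      (∀ ν : ℝ, Module.End.HasEigenvalue (Matrix.toLin' (Lᴴ * L)) (ν : ℂ) → μ ≤ ν) ∧
      Module.finrank ℂ (Module.End.eigenspace (Matrix.toLin' (Lᴴ * L)) (μ : ℂ)) = 1)
    (w : Fin m → ℂ) (hwunit : ∑ j, ‖w j‖ ^ 2 = 1)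
    (hwmin : ∀ u : Fin m → ℂ, (∑ j, ‖u j‖ ^ 2 = 1) →
      ∑ k, ‖L.mulVec w k‖ ^ 2 ≤ ∑ k, ‖L.mulVec u k‖ ^ 2)
    (p q : ℂ → ℂ)
    (hp : ∀ z, p z = ∑ j, Complex.exp (Complex.I * (y j : ℝ)) * w j
        * ∏ k ∈ Finset.univ.erase j, (z - ((y k : ℝ) : ℂ)))
    (hq : ∀ z, q z = ∑ j, w j * ∏ k ∈ Finset.univ.erase j, (z - ((y k : ℝ) : ℂ)))
    (hirr : ∀ z : ℂ, ¬(p z = 0 ∧ q z = 0)) :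
    (∀ t : ℝ, q (t : ℂ) ≠ 0) ∧
    (∀ t : ℝ, ‖p (t : ℂ) / q (t : ℂ)‖ = 1) := by
  obtain ⟨c, hc⟩ := exists_smul_eq_of_isMin_unit hnd hwunit hwmin
    (sum_norm_sq_mirror y w ▸ hwunit) (sum_norm_sq_mulVec_mirror hL w)
  have hc_norm : ‖c‖ = 1 := by
    have h := sum_norm_sq_smul c w
    rw [hc, sum_norm_sq_mirror, hwunit, mul_one] at h
    exact (pow_eq_one_iff_of_nonneg (norm_nonneg c) two_ne_zero).mp h.symm
  have hconj (t : ℝ) : conj (q t) = c * p t := by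
    rw [hq, hp]; exact conj_barycentric_eq_of_mirror_eq_smul hc t
  have hnorm (t : ℝ) : ‖q t‖ = ‖p t‖ := by
    rw [← norm_conj, hconj, norm_mul, hc_norm, one_mul]
  have hq0 (t : ℝ) : q t ≠ 0 := fun h0 =>
    hirr t ⟨norm_eq_zero.mp (by rw [← hnorm, h0, norm_zero]), h0⟩
  exact ⟨hq0, fun t => by rw [norm_div, ← hnorm, div_self (norm_ne_zero_iff.mpr (hq0 t))]⟩
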